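/- Every Hamiltonian graph with an odd number of vertices is a Sterboul–Deming graph; that is, every vertex belongs to a flower or posy relative to some maximum matching. -/

import Mathlib

/-!
On a Hamiltonian cycle `v → v₁ → ⋯ → v₂ₖ → v` take the `k` edges `v₁v₂, v₃v₄, …, v₂ₖ₋₁v₂ₖ`.
Since `2k + 1` vertices carry no matching with more than `k` edges, this is a maximum
matching, and its only unmatched vertex is `v`. The cycle is then an alternating odd cycle
whose base `v` is exposed, i.e. a blossom which, with the trivial stem at `v`, is a flower
through every vertex.
-/

open SimpleGraph

variable {V : Type*} [DecidableEq V]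

/-- `M` is a matching of `G`: a set of edges of `G`, pairwise not sharing a vertex. -/
def IsMatching' (G : SimpleGraph V) (M : Finset (Sym2 V)) : Prop :=
  (↑M : Set (Sym2 V)) ⊆ G.edgeSet ∧
    ∀ e ∈ M, ∀ f ∈ M, e ≠ f → ∀ v : V, ¬(v ∈ e ∧ v ∈ f)

/-- `M` is a maximum matching of `G`. -/
def IsMaxMatching (G : SimpleGraph V) (M : Finset (Sym2 V)) : Prop :=
  IsMatching' G M ∧ ∀ M' : Finset (Sym2 V), IsMatching' G M' → M'.card ≤ M.card

/-- The vertex `v` is matched (saturated) by `M`. -/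
def MatchedBy (M : Finset (Sym2 V)) (v : V) : Prop :=
  ∃ e ∈ M, v ∈ e

/-- A walk is `M`-alternating: consecutive edges alternate between `M` and its complement. -/
def IsAltWalk {G : SimpleGraph V} (M : Finset (Sym2 V)) {u v : V} (w : G.Walk u v) : Prop :=
  w.edges.Chain' (fun e f => e ∈ M ↔ f ∉ M)

/-- The first edge of the walk belongs to `M`. -/
def StartsMatched {G : SimpleGraph V} (M : Finset (Sym2 V)) {u v : V} (w : G.Walk u v) : Prop :=
  ∃ e, w.edges.head? = some e ∧ e ∈ M

/-- The last edge of the walk belongs to `M`. -/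
def EndsMatched {G : SimpleGraph V} (M : Finset (Sym2 V)) {u v : V} (w : G.Walk u v) : Prop :=
  ∃ e, w.edges.getLast? = some e ∧ e ∈ M

/-- The first edge of the walk does not belong to `M`. -/
def StartsUnmatched {G : SimpleGraph V} (M : Finset (Sym2 V)) {u v : V} (w : G.Walk u v) : Prop :=
  ∃ e, w.edges.head? = some e ∧ e ∉ M

/-- The last edge of the walk does not belong to `M`. -/
def EndsUnmatched {G : SimpleGraph V} (M : Finset (Sym2 V)) {u v : V} (w : G.Walk u v) : Prop :=
  ∃ e, w.edges.getLast? = some e ∧ e ∉ M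

/-- An `M`-blossom with base `b`: an odd cycle of length `2k+1` containing exactly `k`
edges of `M`, alternating, whose base `b` is not matched within the cycle. -/
def IsBlossom (G : SimpleGraph V) (M : Finset (Sym2 V)) {b : V} (c : G.Walk b b) : Prop :=
  c.IsCycle ∧ Odd c.length ∧ IsAltWalk M c ∧
    2 * (c.edges.toFinset ∩ M).card + 1 = c.length ∧
    ∀ e ∈ c.edges, e ∈ M → b ∉ e

/-- An `M`-flower: an `M`-blossom with base `b` together with an even `M`-alternating
stem from `b` to an `M`-unmatched vertex `u`, sharing only the base with the blossom. -/
def IsFlower (G : SimpleGraph V) (M : Finset (Sym2 V)) {b u : V}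
    (c : G.Walk b b) (s : G.Walk b u) : Prop :=
  IsBlossom G M c ∧ s.IsPath ∧ Even s.length ∧ IsAltWalk M s ∧
    ¬ MatchedBy M u ∧ ∀ x ∈ s.support, x ∈ c.support → x = b

/-- An `M`-posy: two distinct `M`-blossoms joined by an odd `M`-alternating path
between their bases, starting and ending with matched edges. -/
def IsPosy (G : SimpleGraph V) (M : Finset (Sym2 V)) {b₁ b₂ : V}
    (c₁ : G.Walk b₁ b₁) (c₂ : G.Walk b₂ b₂) (p : G.Walk b₁ b₂) : Prop :=
  IsBlossom G M c₁ ∧ IsBlossom G M c₂ ∧ (b₁ ≠ b₂ ∨ c₁.edges ≠ c₂.edges) ∧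
    p.IsPath ∧ Odd p.length ∧ IsAltWalk M p ∧ StartsMatched M p ∧ EndsMatched M p

/-- An `M`-Tposy: a posy whose connecting path is internally disjoint from both blossoms. -/
def IsTposy (G : SimpleGraph V) (M : Finset (Sym2 V)) {b₁ b₂ : V}
    (c₁ : G.Walk b₁ b₁) (c₂ : G.Walk b₂ b₂) (p : G.Walk b₁ b₂) : Prop :=
  IsPosy G M c₁ c₂ p ∧
    ∀ x ∈ p.support, x ≠ b₁ → x ≠ b₂ → x ∉ c₁.support ∧ x ∉ c₂.support

/-- An `M`-Jposy: two (not necessarily distinct) `M`-blossoms joined by an odd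
`M`-alternating walk between their bases, starting and ending with matched edges. -/
def IsJposy (G : SimpleGraph V) (M : Finset (Sym2 V)) {b₁ b₂ : V}
    (c₁ : G.Walk b₁ b₁) (c₂ : G.Walk b₂ b₂) (w : G.Walk b₁ b₂) : Prop :=
  IsBlossom G M c₁ ∧ IsBlossom G M c₂ ∧
    Odd w.length ∧ IsAltWalk M w ∧ StartsMatched M w ∧ EndsMatched M w

/-- An `M`-Jflower: an `M`-blossom together with an `M`-alternating walk from its base
to an `M`-unmatched vertex. -/
def IsJflower (G : SimpleGraph V) (M : Finset (Sym2 V)) {b u : V}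
    (c : G.Walk b b) (w : G.Walk b u) : Prop :=
  IsBlossom G M c ∧ IsAltWalk M w ∧ ¬ MatchedBy M u

/-- The vertex `x` belongs to some `M`-flower. -/
def InFlower (G : SimpleGraph V) (M : Finset (Sym2 V)) (x : V) : Prop :=
  ∃ (b u : V) (c : G.Walk b b) (s : G.Walk b u),
    IsFlower G M c s ∧ (x ∈ c.support ∨ x ∈ s.support)

/-- The vertex `x` belongs to some `M`-posy. -/
def InPosy (G : SimpleGraph V) (M : Finset (Sym2 V)) (x : V) : Prop :=
  ∃ (b₁ b₂ : V) (c₁ : G.Walk b₁ b₁) (c₂ : G.Walk b₂ b₂) (p : G.Walk b₁ b₂),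
    IsPosy G M c₁ c₂ p ∧ (x ∈ c₁.support ∨ x ∈ c₂.support ∨ x ∈ p.support)

/-- The vertex `x` belongs to some `M`-Tposy. -/
def InTposy (G : SimpleGraph V) (M : Finset (Sym2 V)) (x : V) : Prop :=
  ∃ (b₁ b₂ : V) (c₁ : G.Walk b₁ b₁) (c₂ : G.Walk b₂ b₂) (p : G.Walk b₁ b₂),
    IsTposy G M c₁ c₂ p ∧ (x ∈ c₁.support ∨ x ∈ c₂.support ∨ x ∈ p.support)

/-- The vertex `x` belongs to some `M`-Jposy. -/
def InJposy (G : SimpleGraph V) (M : Finset (Sym2 V)) (x : V) : Prop :=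
  ∃ (b₁ b₂ : V) (c₁ : G.Walk b₁ b₁) (c₂ : G.Walk b₂ b₂) (w : G.Walk b₁ b₂),
    IsJposy G M c₁ c₂ w ∧ (x ∈ c₁.support ∨ x ∈ c₂.support ∨ x ∈ w.support)

/-- The vertex `x` belongs to some `M`-Jflower. -/
def InJflower (G : SimpleGraph V) (M : Finset (Sym2 V)) (x : V) : Prop :=
  ∃ (b u : V) (c : G.Walk b b) (w : G.Walk b u),
    IsJflower G M c w ∧ (x ∈ c.support ∨ x ∈ w.support)

/-- The independence number of `G`. -/
noncomputable def indepNum' (G : SimpleGraph V) : ℕ :=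
  sSup {n | ∃ s : Finset V, (∀ u ∈ s, ∀ w ∈ s, ¬ G.Adj u w) ∧ s.card = n}

/-- The matching number of `G`. -/
noncomputable def matchNum (G : SimpleGraph V) : ℕ :=
  sSup {n | ∃ M : Finset (Sym2 V), IsMatching' G M ∧ M.card = n}

/-- `G` is a König–Egerváry graph: `α(G) + μ(G) = |V(G)|`. -/
def IsKE (G : SimpleGraph V) [Fintype V] : Prop :=
  indepNum' G + matchNum G = Fintype.card V

namespace List

variable {α : Type*}

def pairUp : List α → List (Sym2 α)
  | a :: b :: t => s(a, b) :: pairUp t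
  | _ => []

def oddIdx : List α → List α
  | _ :: b :: t => b :: oddIdx t
  | _ => []

@[simp] lemma pairUp_nil : ([] : List α).pairUp = [] := rfl

@[simp] lemma pairUp_singleton (a : α) : [a].pairUp = [] := rfl

@[simp] lemma oddIdx_nil : ([] : List α).oddIdx = [] := rfl

@[simp] lemma oddIdx_singleton (a : α) : [a].oddIdx = [] := rfl

@[simp] lemma pairUp_cons_cons (a b : α) (t : List α) :
    (a :: b :: t).pairUp = s(a, b) :: t.pairUp := rfl

@[simp] lemma oddIdx_cons_cons (a b : α) (t : List α) :
    (a :: b :: t).oddIdx = b :: t.oddIdx := rfl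

lemma length_pairUp : ∀ l : List α, l.pairUp.length = l.length / 2
  | [] | [_] => by simp
  | _ :: _ :: t => by simp only [pairUp_cons_cons, length_cons, length_pairUp t]; omega

lemma mem_of_mem_pairUp : ∀ {l : List α} {e : Sym2 α} {x : α},
    e ∈ l.pairUp → x ∈ e → x ∈ l
  | a :: b :: t, e, x, he, hx => by
    rcases mem_cons.1 he with rfl | he
    · rcases Sym2.mem_iff.1 hx with rfl | rfl <;> simp
    · exact mem_cons_of_mem _ (mem_cons_of_mem _ (mem_of_mem_pairUp he hx))

lemma Nodup.pairwise_disjoint_pairUp : ∀ {l : List α}, l.Nodup →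
    l.pairUp.Pairwise (fun e f => ∀ x ∈ e, x ∉ f)
  | [], _ | [_], _ => Pairwise.nil
  | a :: b :: t, hl => by
    simp only [nodup_cons, mem_cons, not_or] at hl
    obtain ⟨⟨hab, hat⟩, hbt, ht⟩ := hl
    refine pairwise_cons.2 ⟨fun f hf x hx hxf => ?_, ht.pairwise_disjoint_pairUp⟩
    have hxt := mem_of_mem_pairUp hf hxf
    rcases Sym2.mem_iff.1 hx with rfl | rfl
    exacts [hat hxt, hbt hxt]

lemma Nodup.pairUp {l : List α} (hl : l.Nodup) : l.pairUp.Nodup :=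
  hl.pairwise_disjoint_pairUp.imp fun {e f} h (hef : e = f) =>
    h _ e.out_fst_mem (hef ▸ e.out_fst_mem)

lemma Nodup.getLast_notMem_of_mem_pairUp : ∀ {l : List α}, l.Nodup → ∀ (hne : l ≠ []),
    Odd l.length → ∀ e ∈ l.pairUp, l.getLast hne ∉ e
  | [_], _, _, _, e, he => by simp at he
  | [_, _], _, _, hodd, _, _ => absurd hodd (Nat.not_odd_iff_even.2 even_two)
  | a :: b :: c :: t, hl, _, hodd, e, he => by
    rw [getLast_cons_cons, getLast_cons_cons]
    rcases mem_cons.1 he with rfl | he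
    · have hmem := (c :: t).getLast_mem (cons_ne_nil c t)
      have ha : a ∉ c :: t := fun h => (nodup_cons.1 hl).1 (mem_cons_of_mem b h)
      have hb : b ∉ c :: t := (nodup_cons.1 hl.of_cons).1
      rw [Sym2.mem_iff, not_or]
      exact ⟨fun h => ha (h ▸ hmem), fun h => hb (h ▸ hmem)⟩
    · refine hl.of_cons.of_cons.getLast_notMem_of_mem_pairUp _ ?_ e he
      simpa [Nat.odd_add_one] using hodd

lemma oddIdx_sublist : ∀ l : List α, l.oddIdx <+ l
  | [] | [_] => by simp
  | a :: b :: t => ((oddIdx_sublist t).cons_cons b).cons a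

lemma Nodup.getElem_mem_oddIdx_iff : ∀ {l : List α}, l.Nodup →
    ∀ (i : ℕ) (hi : i < l.length), l[i] ∈ l.oddIdx ↔ Odd i
  | [_], _, 0, _ => by simp
  | a :: b :: t, hl, 0, _ => by
    simp only [nodup_cons, mem_cons, not_or] at hl
    simpa [hl.1.1] using fun h => hl.1.2 ((oddIdx_sublist t).subset h)
  | a :: b :: t, _, 1, _ => by simp
  | a :: b :: t, hl, i + 2, hi => by
    have hbt : b ∉ t := (nodup_cons.1 hl.of_cons).1
    have hit : i < t.length := by simpa using hi
    have hne : t[i] ≠ b := fun h => hbt (h ▸ getElem_mem _)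
    simp only [getElem_cons_succ, oddIdx_cons_cons, mem_cons, hne, false_or,
      hl.of_cons.of_cons.getElem_mem_oddIdx_iff i hit]
    simp [Nat.odd_add_one]

lemma Nodup.isChain_mem_oddIdx {l : List α} (hl : l.Nodup) :
    l.IsChain (fun e f => e ∈ l.oddIdx ↔ f ∉ l.oddIdx) := by
  refine isChain_iff_getElem.2 fun i hi => ?_
  rw [hl.getElem_mem_oddIdx_iff, hl.getElem_mem_oddIdx_iff, Nat.odd_add_one, not_not]

end List

lemma IsMatching'.two_mul_card_le [Fintype V] {G : SimpleGraph V} {M : Finset (Sym2 V)}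
    (hM : IsMatching' G M) : 2 * M.card ≤ Fintype.card V := by
  have hdisj : (M : Set (Sym2 V)).PairwiseDisjoint Sym2.toFinset := fun e he f hf hef =>
    Finset.disjoint_left.2 fun x hxe hxf =>
      hM.2 e he f hf hef x ⟨Sym2.mem_toFinset.1 hxe, Sym2.mem_toFinset.1 hxf⟩
  have hcard : ∀ e ∈ M, e.toFinset.card = 2 := fun e he =>
    Sym2.card_toFinset_of_not_isDiag e (G.not_isDiag_of_mem_edgeSet (hM.1 he))
  calc 2 * M.card = ∑ e ∈ M, e.toFinset.card := by rw [Finset.sum_const_nat hcard, mul_comm]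
    _ = (M.biUnion Sym2.toFinset).card := (Finset.card_biUnion hdisj).symm
    _ ≤ Fintype.card V := Finset.card_le_univ _

lemma IsBlossom.isFlower_nil {G : SimpleGraph V} {M : Finset (Sym2 V)} {b : V} {c : G.Walk b b}
    (hc : IsBlossom G M c) (hb : ¬ MatchedBy M b) : IsFlower G M c Walk.nil :=
  ⟨hc, Walk.IsPath.nil, ⟨0, rfl⟩, List.isChain_nil, hb, fun _ hx _ => by simpa using hx⟩

namespace SimpleGraph.Walk

variable {G : SimpleGraph V} {u v : V}

lemma pairUp_support_tail {W : Type*} {H : SimpleGraph W} :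
    ∀ {u v : W} (w : H.Walk u v), w.support.tail.pairUp = w.edges.oddIdx
  | _, _, nil | _, _, cons _ nil => rfl
  | _, _, cons _ (cons _ q) => by
    rw [support_cons, List.tail_cons, support_cons, ← q.cons_tail_support,
      List.pairUp_cons_cons, pairUp_support_tail q]
    rfl

def alternateEdges (w : G.Walk u v) : Finset (Sym2 V) := w.support.tail.pairUp.toFinset

lemma mem_alternateEdges {w : G.Walk u v} {e : Sym2 V} :
    e ∈ w.alternateEdges ↔ e ∈ w.edges.oddIdx := by
  rw [alternateEdges, List.mem_toFinset, pairUp_support_tail]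

lemma alternateEdges_subset_edges (w : G.Walk u v) : w.alternateEdges ⊆ w.edges.toFinset :=
  fun _ he => List.mem_toFinset.2 ((List.oddIdx_sublist _).subset (mem_alternateEdges.1 he))

lemma isMatching'_alternateEdges (w : G.Walk u v) (hw : w.support.tail.Nodup) :
    IsMatching' G w.alternateEdges := by
  refine ⟨fun e he => w.edges_subset_edgeSet <|
    List.mem_toFinset.1 (w.alternateEdges_subset_edges he), fun e he f hf hef x hx => ?_⟩
  have : Std.Symm fun e f : Sym2 V => ∀ x ∈ e, x ∉ f := ⟨fun _ _ h x hx hy => h x hy hx⟩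
  rw [alternateEdges, List.mem_toFinset] at he hf
  exact hw.pairwise_disjoint_pairUp.forall he hf hef x hx.1 hx.2

lemma card_alternateEdges (w : G.Walk u v) (hw : w.support.tail.Nodup) :
    w.alternateEdges.card = w.length / 2 := by
  rw [alternateEdges, List.toFinset_card_of_nodup hw.pairUp, List.length_pairUp,
    List.length_tail, length_support, Nat.add_sub_cancel]

lemma isAltWalk_alternateEdges (w : G.Walk u v) (hw : w.edges.Nodup) :
    IsAltWalk w.alternateEdges w := by
  refine hw.isChain_mem_oddIdx.imp fun e f h => ?_
  simpa only [mem_alternateEdges] using h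

lemma not_matchedBy_alternateEdges (w : G.Walk u v) (hw : w.support.tail.Nodup)
    (hodd : Odd w.length) : ¬ MatchedBy w.alternateEdges v := by
  have hlen : w.support.tail.length = w.length := by
    rw [List.length_tail, length_support, Nat.add_sub_cancel]
  have hne : w.support.tail ≠ [] := List.ne_nil_of_length_pos (hlen ▸ hodd.pos)
  rintro ⟨e, he, hv⟩
  refine hw.getLast_notMem_of_mem_pairUp hne (hlen ▸ hodd) e (List.mem_toFinset.1 he) ?_
  rwa [List.getLast_tail, getLast_support]

lemma IsCycle.isBlossom_alternateEdges {c : G.Walk u u} (hc : c.IsCycle) (hodd : Odd c.length) :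
    IsBlossom G c.alternateEdges c := by
  refine ⟨hc, hodd, c.isAltWalk_alternateEdges hc.edges_nodup, ?_, fun e _ he hu =>
    c.not_matchedBy_alternateEdges hc.support_nodup hodd ⟨e, he, hu⟩⟩
  rw [Finset.inter_eq_right.2 c.alternateEdges_subset_edges, c.card_alternateEdges hc.support_nodup]
  exact Nat.two_mul_div_two_add_one_of_odd hodd

lemma IsHamiltonianCycle.isMaxMatching_alternateEdges [Fintype V]
    {c : G.Walk u u} (hc : c.IsHamiltonianCycle) :
    IsMaxMatching G c.alternateEdges := by
  have hcard : c.alternateEdges.card = Fintype.card V / 2 := by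
    rw [c.card_alternateEdges hc.isCycle.support_nodup, hc.length_eq]
  refine ⟨c.isMatching'_alternateEdges hc.isCycle.support_nodup, fun M hM => ?_⟩
  have := hM.two_mul_card_le
  omega

end SimpleGraph.Walk

/-- Every Hamiltonian graph with an odd number of vertices is a
Sterboul–Deming graph: every vertex lies in a flower or posy relative to some
maximum matching. -/
theorem stmt_14 {V : Type*} [DecidableEq V] [Fintype V] (G : SimpleGraph V)
    (hodd : Odd (Fintype.card V))
    (hham : ∃ (v : V) (c : G.Walk v v), c.IsHamiltonianCycle) :
    ∀ x : V, ∃ M : Finset (Sym2 V), IsMaxMatching G M ∧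
      (InFlower G M x ∨ InPosy G M x) := by
  intro x
  obtain ⟨v, c, hc⟩ := hham
  have hlen : Odd c.length := hc.length_eq ▸ hodd
  have hflower : IsFlower G c.alternateEdges c Walk.nil :=
    (hc.isCycle.isBlossom_alternateEdges hlen).isFlower_nil
      (c.not_matchedBy_alternateEdges hc.isCycle.support_nodup hlen)
  exact ⟨c.alternateEdges, hc.isMaxMatching_alternateEdges,
    Or.inl ⟨v, v, c, Walk.nil, hflower, Or.inl (hc.mem_support x)⟩⟩
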